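/- arXiv:0708.4378 — 4 statements merged into one kernel-verified Lean document; each statement's English description precedes it below -/
import Mathlib

section
/- (Closedness of the set of stable states) Suppose W : Y → ℝ is lower semicontinuous, σ : [0,T] → Y* is continuous, and D : Y → [0,∞) is continuous. If (t_k, y_k) ∈ [0,T] × Y satisfy the stability condition W(y_k) − ⟨σ(t_k), y_k⟩ ≤ W(ȳ) − ⟨σ(t_k), ȳ⟩ + D(ȳ − y_k) for all ȳ ∈ Y, and (t_k, y_k) → (t, y), with y_k → y in the topology making W lsc, D continuous, and the pairings convergent, then (t, y) satisfies the stability condition at time t: W(y) − ⟨σ(t), y⟩ ≤ W(ȳ) − ⟨σ(t), ȳ⟩ + D(ȳ − y) for all ȳ ∈ Y. -/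
/-- Closedness of the set of stable states. -/
theorem stmt4 {Y : Type*} [NormedAddCommGroup Y] [NormedSpace ℝ Y] [FiniteDimensional ℝ Y]
    (T : ℝ) (W : Y → ℝ) (hW : LowerSemicontinuous W)
    (σ : ℝ → Y →L[ℝ] ℝ) (hσ : Continuous σ)
    (D : Y → ℝ) (hDc : Continuous D) (hDnn : ∀ a, 0 ≤ D a)
    (t : ℕ → ℝ) (y : ℕ → Y) (ht : ∀ k, t k ∈ Set.Icc 0 T)
    (hstab : ∀ k, ∀ yb : Y, W (y k) - σ (t k) (y k) ≤ W yb - σ (t k) yb + D (yb - y k))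
    (tl : ℝ) (yl : Y)
    (htl : Filter.Tendsto t Filter.atTop (nhds tl))
    (hyl : Filter.Tendsto y Filter.atTop (nhds yl)) :
    tl ∈ Set.Icc 0 T ∧ ∀ yb : Y, W yl - σ tl yl ≤ W yb - σ tl yb + D (yb - yl) := by
  constructor
  · exact ⟨ge_of_tendsto htl (Filter.Eventually.of_forall fun k => (ht k).1),
      le_of_tendsto htl (Filter.Eventually.of_forall fun k => (ht k).2)⟩
  · intro yb
    -- evaluation of σ along the sequences
    have hσt : Filter.Tendsto (fun k => σ (t k)) Filter.atTop (nhds (σ tl)) :=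
      (hσ.tendsto tl).comp htl
    have heval : Filter.Tendsto (fun k => σ (t k) (y k)) Filter.atTop (nhds (σ tl yl)) := by
      have : Continuous fun p : (Y →L[ℝ] ℝ) × Y => p.1 p.2 :=
        isBoundedBilinearMap_apply.continuous
      exact (this.tendsto (σ tl, yl)).comp (hσt.prodMk_nhds hyl)
    have hevalb : Filter.Tendsto (fun k => σ (t k) yb) Filter.atTop (nhds (σ tl yb)) := by
      have : Continuous fun p : (Y →L[ℝ] ℝ) × Y => p.1 p.2 :=
        isBoundedBilinearMap_apply.continuous
      exact (this.tendsto (σ tl, yb)).comp (hσt.prodMk_nhds (tendsto_const_nhds))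
    have hD : Filter.Tendsto (fun k => D (yb - y k)) Filter.atTop (nhds (D (yb - yl))) :=
      (hDc.tendsto _).comp (tendsto_const_nhds.sub hyl)
    set L : ℝ := W yb - σ tl yb + D (yb - yl) + σ tl yl with hL
    have hf : Filter.Tendsto (fun k => W yb - σ (t k) yb + D (yb - y k) + σ (t k) (y k))
        Filter.atTop (nhds L) := ((tendsto_const_nhds.sub hevalb).add hD).add heval
    have hWle : ∀ k, W (y k) ≤ W yb - σ (t k) yb + D (yb - y k) + σ (t k) (y k) := by
      intro k; have := hstab k yb; linarith
    have hkey : W yl ≤ L := by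
      by_contra h
      push_neg at h
      set c : ℝ := (L + W yl) / 2 with hc
      have hc1 : L < c := by simp [hc]; linarith
      have hc2 : c < W yl := by simp [hc]; linarith
      have hev : ∀ᶠ k in Filter.atTop, c < W (y k) :=
        hyl.eventually (hW yl c hc2)
      have : c ≤ L := ge_of_tendsto hf (hev.mono fun k hk => le_trans hk.le (hWle k))
      linarith
    linarith
end

section
/- (Energy convergence along stable sequences) Let y_n be stable at times s_n with s_n → t and y_n → y in Y, where W is lower semicontinuous, σ continuous, and D continuous with D(0)=0. Then W(y_n) − ⟨σ(s_n), y_n⟩ → W(y) − ⟨σ(t), y⟩; in particular W(y_n) → W(y). -/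
/-!
Testing the stability of `y n` against the limit `yl` itself gives the upper bound
`W (y n) ≤ W yl - σ (s n) yl + D (yl - y n) + σ (s n) (y n)`, whose right-hand side tends to
`W yl` because `D (yl - y n) → D 0 = 0`. Lower semicontinuity provides the matching lower bound.
-/

open Filter Topology

theorem LowerSemicontinuousAt.tendsto_of_eventually_le {α β ι : Type*} [TopologicalSpace α]
    [LinearOrder β] [TopologicalSpace β] [OrderTopology β] {f : α → β} {x : α}
    (hf : LowerSemicontinuousAt f x) {l : Filter ι} {u : ι → α} {g : ι → β}
    (hu : Tendsto u l (𝓝 x)) (hg : Tendsto g l (𝓝 (f x)))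
    (hfg : ∀ᶠ i in l, f (u i) ≤ g i) :
    Tendsto (fun i => f (u i)) l (𝓝 (f x)) :=
  tendsto_order.2
    ⟨fun _ ha => hu.eventually (hf _ ha),
     fun _ hb => (hfg.and (hg.eventually_lt_const hb)).mono fun _ h => h.1.trans_lt h.2⟩

theorem Filter.Tendsto.clm_apply {ι 𝕜 E F : Type*} [NontriviallyNormedField 𝕜]
    [NormedAddCommGroup E] [NormedSpace 𝕜 E] [NormedAddCommGroup F] [NormedSpace 𝕜 F]
    {l : Filter ι} {φ : ι → E →L[𝕜] F} {x : ι → E} {φ₀ : E →L[𝕜] F} {x₀ : E}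
    (hφ : Tendsto φ l (𝓝 φ₀)) (hx : Tendsto x l (𝓝 x₀)) :
    Tendsto (fun i => φ i (x i)) l (𝓝 (φ₀ x₀)) :=
  (isBoundedBilinearMap_apply.continuous.tendsto (φ₀, x₀)).comp (hφ.prodMk_nhds hx)

section Stability

variable {Y : Type*} [NormedAddCommGroup Y] [NormedSpace ℝ Y]

def IsStable (W D : Y → ℝ) (ℓ : Y →L[ℝ] ℝ) (y : Y) : Prop :=
  ∀ yb, W y - ℓ y ≤ W yb - ℓ yb + D (yb - y)

theorem tendsto_of_eventually_isStable {ι X : Type*} [TopologicalSpace X] {l : Filter ι}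
    {W D : Y → ℝ} {σ : X → Y →L[ℝ] ℝ} {s : ι → X} {y : ι → Y} {t : X} {yl : Y}
    (hW : LowerSemicontinuousAt W yl) (hσ : ContinuousAt σ t) (hD : ContinuousAt D 0)
    (hD0 : D 0 = 0) (hstab : ∀ᶠ i in l, IsStable W D (σ (s i)) (y i))
    (hs : Tendsto s l (𝓝 t)) (hy : Tendsto y l (𝓝 yl)) :
    Tendsto (fun i => W (y i)) l (𝓝 (W yl)) := by
  have hσs : Tendsto (fun i => σ (s i)) l (𝓝 (σ t)) := hσ.tendsto.comp hs
  have hdiff : Tendsto (fun i => yl - y i) l (𝓝 0) := by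
    simpa using (tendsto_const_nhds (x := yl)).sub hy
  have hDy : Tendsto (fun i => D (yl - y i)) l (𝓝 0) := by
    rw [← hD0]
    exact hD.tendsto.comp hdiff
  have hbound : Tendsto (fun i => W yl - σ (s i) yl + D (yl - y i) + σ (s i) (y i)) l
      (𝓝 (W yl)) := by
    have hload : Tendsto (fun i => σ (s i) yl) l (𝓝 (σ t yl)) :=
      hσs.clm_apply tendsto_const_nhds
    simpa using (((tendsto_const_nhds (x := W yl)).sub hload).add hDy).add (hσs.clm_apply hy)
  exact hW.tendsto_of_eventually_le hy hbound (hstab.mono fun i hi => by linarith [hi yl])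

end Stability

theorem stmt5_general {Y : Type*} [NormedAddCommGroup Y] [NormedSpace ℝ Y]
    (W : Y → ℝ) (hW : LowerSemicontinuous W)
    (σ : ℝ → Y →L[ℝ] ℝ) (hσ : Continuous σ)
    (D : Y → ℝ) (hDc : Continuous D) (hD0 : D 0 = 0)
    (s : ℕ → ℝ) (y : ℕ → Y)
    (hstab : ∀ k, ∀ yb : Y, W (y k) - σ (s k) (y k) ≤ W yb - σ (s k) yb + D (yb - y k))
    (t : ℝ) (yl : Y)
    (hst : Filter.Tendsto s Filter.atTop (nhds t))
    (hyl : Filter.Tendsto y Filter.atTop (nhds yl)) :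
    Filter.Tendsto (fun k => W (y k) - σ (s k) (y k)) Filter.atTop (nhds (W yl - σ t yl)) ∧
    Filter.Tendsto (fun k => W (y k)) Filter.atTop (nhds (W yl)) := by
  have hW_lim : Tendsto (fun k => W (y k)) atTop (𝓝 (W yl)) :=
    tendsto_of_eventually_isStable (hW yl) hσ.continuousAt hDc.continuousAt hD0
      (Eventually.of_forall hstab) hst hyl
  exact ⟨hW_lim.sub (((hσ.tendsto t).comp hst).clm_apply hyl), hW_lim⟩

/-- Energy convergence along stable sequences. -/
theorem stmt5 {Y : Type*} [NormedAddCommGroup Y] [NormedSpace ℝ Y] [FiniteDimensional ℝ Y]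
    (T : ℝ) (W : Y → ℝ) (hW : LowerSemicontinuous W)
    (σ : ℝ → Y →L[ℝ] ℝ) (hσ : Continuous σ)
    (D : Y → ℝ) (hDc : Continuous D) (hDnn : ∀ a, 0 ≤ D a) (hD0 : D 0 = 0)
    (s : ℕ → ℝ) (y : ℕ → Y) (hs : ∀ k, s k ∈ Set.Icc 0 T)
    (hstab : ∀ k, ∀ yb : Y, W (y k) - σ (s k) (y k) ≤ W yb - σ (s k) yb + D (yb - y k))
    (t : ℝ) (yl : Y)
    (hst : Filter.Tendsto s Filter.atTop (nhds t))
    (hyl : Filter.Tendsto y Filter.atTop (nhds yl)) :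
    Filter.Tendsto (fun k => W (y k) - σ (s k) (y k)) Filter.atTop (nhds (W yl - σ t yl)) ∧
    Filter.Tendsto (fun k => W (y k)) Filter.atTop (nhds (W yl)) :=
  stmt5_general W hW σ hσ D hDc hD0 s y hstab t yl hst hyl
end

section
/- (Discrete energy upper estimate for incremental solutions) Let 0 = t₀ < t₁ < ⋯ < t_N = T, y₀ given, and for i = 1,…,N let y_i minimize y ↦ W(y) − ⟨σ(t_i), y⟩ + D(y − y_{i−1}). Then for every m ≤ N: W(y_m) − ⟨σ(t_m), y_m⟩ + Σ_{i=1}^m D(y_i − y_{i−1}) ≤ W(y₀) − ⟨σ(t₀), y₀⟩ − Σ_{i=1}^m ⟨σ(t_i) − σ(t_{i−1}), y_{i−1}⟩. -/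
open Finset RealInnerProductSpace

theorem add_sum_range_le_sub_sum_range {e d c : ℕ → ℝ} {m : ℕ}
    (h : ∀ i < m, e (i + 1) + d i ≤ e i - c i) :
    e m + ∑ i ∈ range m, d i ≤ e 0 - ∑ i ∈ range m, c i := by
  have hsum : ∑ i ∈ range m, (e (i + 1) - e i) ≤ ∑ i ∈ range m, (-d i - c i) :=
    sum_le_sum fun i hi => by linarith [h i (mem_range.1 hi)]
  rw [sum_range_sub, sum_sub_distrib, sum_neg_distrib] at hsum
  linarith

theorem incremental_energy_step_le {H : Type*} [NormedAddCommGroup H] [InnerProductSpace ℝ H]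
    {W D : H → ℝ} (hD0 : D 0 = 0) {s s₀ x x₀ : H}
    (hx : ∀ z, W x - ⟪s, x⟫ + D (x - x₀) ≤ W z - ⟪s, z⟫ + D (z - x₀)) :
    W x - ⟪s, x⟫ + D (x - x₀) ≤ W x₀ - ⟪s₀, x₀⟫ - ⟪s - s₀, x₀⟫ := by
  have hstay := hx x₀
  rw [sub_self, hD0, add_zero] at hstay
  rw [inner_sub_left]
  linarith

theorem stmt7_general {H : Type*} [NormedAddCommGroup H] [InnerProductSpace ℝ H]
    (N : ℕ) (t : ℕ → ℝ)
    (W : H → ℝ) (D : H → ℝ) (hD0 : D 0 = 0)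
    (σ : ℝ → H) (y : ℕ → H)
    (hmin : ∀ i : ℕ, 1 ≤ i → i ≤ N → ∀ x : H,
      W (y i) - (inner ℝ (σ (t i)) (y i) : ℝ) + D (y i - y (i - 1))
        ≤ W x - (inner ℝ (σ (t i)) x : ℝ) + D (x - y (i - 1))) :
    ∀ m : ℕ, m ≤ N →
      W (y m) - (inner ℝ (σ (t m)) (y m) : ℝ)
          + ∑ i ∈ Finset.range m, D (y (i + 1) - y i)
        ≤ W (y 0) - (inner ℝ (σ (t 0)) (y 0) : ℝ)
          - ∑ i ∈ Finset.range m, (inner ℝ (σ (t (i + 1)) - σ (t i)) (y i) : ℝ) := by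
  intro m hm
  refine add_sum_range_le_sub_sum_range (e := fun i => W (y i) - ⟪σ (t i), y i⟫) fun i hi => ?_
  have hstep := hmin (i + 1) (Nat.le_add_left 1 i) (by omega)
  rw [Nat.add_sub_cancel] at hstep
  exact incremental_energy_step_le hD0 hstep

/-- Discrete energy upper estimate for incremental solutions. -/
theorem stmt7 {H : Type*} [NormedAddCommGroup H] [InnerProductSpace ℝ H]
    (N : ℕ) (t : ℕ → ℝ) (T : ℝ) (ht0 : t 0 = 0) (htN : t N = T)
    (htmono : ∀ i j, i ≤ j → j ≤ N → t i ≤ t j)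
    (W : H → ℝ) (D : H → ℝ) (hDnn : ∀ a, 0 ≤ D a) (hD0 : D 0 = 0)
    (σ : ℝ → H) (y : ℕ → H)
    (hmin : ∀ i : ℕ, 1 ≤ i → i ≤ N → ∀ x : H,
      W (y i) - (inner ℝ (σ (t i)) (y i) : ℝ) + D (y i - y (i - 1))
        ≤ W x - (inner ℝ (σ (t i)) x : ℝ) + D (x - y (i - 1))) :
    ∀ m : ℕ, m ≤ N →
      W (y m) - (inner ℝ (σ (t m)) (y m) : ℝ)
          + ∑ i ∈ Finset.range m, D (y (i + 1) - y i)
        ≤ W (y 0) - (inner ℝ (σ (t 0)) (y 0) : ℝ)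
          - ∑ i ∈ Finset.range m, (inner ℝ (σ (t (i + 1)) - σ (t i)) (y i) : ℝ) :=
  stmt7_general N t W D hD0 σ y hmin
end

section
/- (Lower energy estimate from stability) Let y : [0,T] → Y be such that y(s) is stable at each s, σ : [0,T] → Y* is continuously differentiable, and y is continuous and bounded. Then for every t ∈ [0,T]: W(y(t)) − ⟨σ(t), y(t)⟩ + Diss_D(y,[0,t]) ≥ W(y(0)) − ⟨σ(0), y(0)⟩ − ∫₀^t ⟨σ'(s), y(s)⟩ ds. -/
/-!
Test stability at each node `s_j` of a partition of `[a, b]` with the competitor `y(s_{j+1})`: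
the energy drops by at most `⟨σ(s_{j+1}) - σ(s_j), y(s_{j+1})⟩ + D(y(s_{j+1}) - y(s_j))`, and
these bounds telescope. On a fine uniform partition, uniform continuity of `y` makes the sum of
the work increments `⟨σ(s_{j+1}) - σ(s_j), y(s_{j+1})⟩ = ∫ ⟨σ', y(s_{j+1})⟩` an `ε`-approximation
from above of `∫ ⟨σ', y⟩`.
-/

open scoped ENNReal

/-- The dissipation of `z` on `[s,t]`: supremum over finite partitions of `[s,t]`
of the sums of `D` of the increments. -/
noncomputable def diss {Y : Type*} [NormedAddCommGroup Y] (D : Y → ℝ)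
    (z : ℝ → Y) (s t : ℝ) : ℝ≥0∞ :=
  ⨆ N : ℕ, ⨆ u : {u : Fin (N + 1) → ℝ // Monotone u ∧ u 0 = s ∧ u (Fin.last N) = t},
    ENNReal.ofReal (∑ i : Fin N, D (z (u.1 i.succ) - z (u.1 i.castSucc)))

open Set Finset

lemma ofReal_sum_le_diss {Y : Type*} [NormedAddCommGroup Y] (D : Y → ℝ) (z : ℝ → Y)
    {p : ℕ → ℝ} (hp : Monotone p) (N : ℕ) :
    ENNReal.ofReal (∑ j ∈ range N, D (z (p (j + 1)) - z (p j))) ≤ diss D z (p 0) (p N) := by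
  have hu : Monotone (fun i : Fin (N + 1) => p i) := fun _ _ hij => hp hij
  refine le_iSup_of_le N (le_iSup_of_le ⟨_, hu, rfl, rfl⟩ ?_)
  simp [← Fin.sum_univ_eq_sum_range (fun j => D (z (p (j + 1)) - z (p j)))]

lemma EReal.coe_le_coe_add_coe_of_forall_pos {a b : ℝ} {d : ℝ≥0∞}
    (h : ∀ ε > 0, ∃ S : ℝ, ENNReal.ofReal S ≤ d ∧ a ≤ b + S + ε) :
    (a : EReal) ≤ b + d := by
  rcases eq_or_ne d ⊤ with rfl | hd
  · simp [EReal.add_top_of_ne_bot (EReal.coe_ne_bot _)]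
  rw [← ENNReal.ofReal_toReal hd, EReal.coe_ennreal_ofReal, max_eq_left ENNReal.toReal_nonneg,
    ← EReal.coe_add, EReal.coe_le_coe_iff]
  refine le_of_forall_pos_le_add fun ε hε => ?_
  obtain ⟨S, hSd, hS⟩ := h ε hε
  linarith [(ENNReal.ofReal_le_iff_le_toReal hd).1 hSd]

noncomputable def uniformPartition (a b : ℝ) (N : ℕ) (j : ℕ) : ℝ := a + j * ((b - a) / N)

section uniformPartition

variable {a b : ℝ} {N : ℕ}

@[simp] lemma uniformPartition_zero : uniformPartition a b N 0 = a := by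
  simp [uniformPartition]

lemma uniformPartition_self (hN : N ≠ 0) : uniformPartition a b N N = b := by
  have : (N : ℝ) ≠ 0 := Nat.cast_ne_zero.2 hN
  simp only [uniformPartition]
  field_simp
  ring

lemma uniformPartition_succ_sub (j : ℕ) :
    uniformPartition a b N (j + 1) - uniformPartition a b N j = (b - a) / N := by
  simp only [uniformPartition]; push_cast; ring

lemma monotone_uniformPartition (hab : a ≤ b) : Monotone (uniformPartition a b N) :=
  fun _ _ hij => add_le_add_right (mul_le_mul_of_nonneg_right (Nat.cast_le.2 hij)
    (div_nonneg (sub_nonneg.2 hab) N.cast_nonneg)) a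

lemma uniformPartition_mem_Icc (hab : a ≤ b) {j : ℕ} (hj : j ≤ N) :
    uniformPartition a b N j ∈ Icc a b := by
  rcases Nat.eq_zero_or_pos N with rfl | hN
  · obtain rfl := Nat.le_zero.1 hj; simp [hab]
  have h0 := monotone_uniformPartition (N := N) hab (Nat.zero_le j)
  have hN' := monotone_uniformPartition (N := N) hab hj
  rw [uniformPartition_zero] at h0
  rw [uniformPartition_self hN.ne'] at hN'
  exact ⟨h0, hN'⟩

end uniformPartition

section energy

variable {Y : Type*} [NormedAddCommGroup Y] [InnerProductSpace ℝ Y]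

def energy (W : Y → ℝ) (σ : ℝ → Y) (s : ℝ) (z : Y) : ℝ := W z - inner ℝ (σ s) z

lemma energy_sub_energy_le {W D : Y → ℝ} {σ y : ℝ → Y} {s : ℝ}
    (hs : ∀ yb, energy W σ s (y s) ≤ energy W σ s yb + D (yb - y s)) (r : ℝ) :
    energy W σ s (y s) - energy W σ r (y r) ≤ inner ℝ (σ r - σ s) (y r) + D (y r - y s) := by
  have := hs (y r)
  simp only [energy, inner_sub_left] at this ⊢
  linarith

lemma inner_sub_le_integral_inner_add {σ σ' y : ℝ → Y} {a b K η : ℝ} {v : Y} (hab : a ≤ b)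
    (hσ : ∀ x ∈ Icc a b, HasDerivAt σ (σ' x) x) (hσ' : ContinuousOn σ' (Icc a b))
    (hy : ContinuousOn y (Icc a b)) (hK : ∀ x ∈ Icc a b, ‖σ' x‖ ≤ K)
    (hv : ∀ x ∈ Icc a b, ‖v - y x‖ ≤ η) :
    inner ℝ (σ b - σ a) v ≤ (∫ x in a..b, inner ℝ (σ' x) (y x)) + K * η * (b - a) := by
  have hσv : ContinuousOn (fun x => inner ℝ (σ' x) v) (Icc a b) := hσ'.inner continuousOn_const
  have hσy : ContinuousOn (fun x => inner ℝ (σ' x) (y x)) (Icc a b) := hσ'.inner hy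
  have hftc : inner ℝ (σ b - σ a) v = ∫ x in a..b, inner ℝ (σ' x) v := by
    have hd : ∀ x ∈ uIcc a b, HasDerivAt (fun x => inner ℝ (σ x) v) (inner ℝ (σ' x) v) x := by
      intro x hx
      simpa using (hσ x (uIcc_of_le hab ▸ hx)).inner ℝ (hasDerivAt_const x v)
    rw [inner_sub_left,
      intervalIntegral.integral_eq_sub_of_hasDerivAt hd (hσv.intervalIntegrable_of_Icc hab)]
  have hpt : ∀ x ∈ Icc a b, inner ℝ (σ' x) v ≤ inner ℝ (σ' x) (y x) + K * η := by
    intro x hx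
    have : inner ℝ (σ' x) (v - y x) ≤ K * η :=
      (real_inner_le_norm _ _).trans
        (mul_le_mul (hK x hx) (hv x hx) (norm_nonneg _) ((norm_nonneg _).trans (hK x hx)))
    rw [inner_sub_right] at this
    linarith
  calc inner ℝ (σ b - σ a) v = ∫ x in a..b, inner ℝ (σ' x) v := hftc
    _ ≤ ∫ x in a..b, (inner ℝ (σ' x) (y x) + K * η) :=
      intervalIntegral.integral_mono_on hab (hσv.intervalIntegrable_of_Icc hab)
        ((hσy.add continuousOn_const).intervalIntegrable_of_Icc hab) hpt
    _ = (∫ x in a..b, inner ℝ (σ' x) (y x)) + K * η * (b - a) := by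
      rw [intervalIntegral.integral_add (hσy.intervalIntegrable_of_Icc hab)
        intervalIntegrable_const, intervalIntegral.integral_const, smul_eq_mul]
      ring

lemma exists_sum_inner_sub_le_integral_add {σ σ' y : ℝ → Y} {a b ε : ℝ} (hab : a ≤ b)
    (hσ : ∀ x ∈ Icc a b, HasDerivAt σ (σ' x) x) (hσ' : ContinuousOn σ' (Icc a b))
    (hy : ContinuousOn y (Icc a b)) (hε : 0 < ε) :
    ∃ N ≠ 0, ∑ j ∈ range N, inner ℝ (σ (uniformPartition a b N (j + 1))
        - σ (uniformPartition a b N j)) (y (uniformPartition a b N (j + 1)))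
      ≤ (∫ x in a..b, inner ℝ (σ' x) (y x)) + ε := by
  obtain ⟨K, hK⟩ := isCompact_Icc.exists_bound_of_continuousOn hσ'
  obtain ⟨η, hη, hKη⟩ := exists_pos_mul_lt hε (K * (b - a))
  obtain ⟨δ, hδ, hyδ⟩ := Metric.uniformContinuousOn_iff.1
    (isCompact_Icc.uniformContinuousOn_of_continuous hy) η hη
  obtain ⟨N, hN⟩ := exists_nat_gt ((b - a) / δ)
  have hN0 : (0 : ℝ) < N := (div_nonneg (sub_nonneg.2 hab) hδ.le).trans_lt hN
  have hmesh : (b - a) / N < δ := by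
    rw [div_lt_iff₀ hN0]; rw [div_lt_iff₀ hδ] at hN; linarith
  set p := uniformPartition a b N
  have hp := monotone_uniformPartition (N := N) hab
  have hsub : ∀ j < N, Icc (p j) (p (j + 1)) ⊆ Icc a b := fun j hj =>
    Icc_subset_Icc (uniformPartition_mem_Icc hab hj.le).1 (uniformPartition_mem_Icc hab hj).2
  have hpiece : ∀ j < N, inner ℝ (σ (p (j + 1)) - σ (p j)) (y (p (j + 1)))
      ≤ (∫ x in p j..p (j + 1), inner ℝ (σ' x) (y x)) + K * η * ((b - a) / N) := by
    intro j hj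
    rw [← uniformPartition_succ_sub j]
    refine inner_sub_le_integral_inner_add (hp j.le_succ) (fun x hx => hσ x (hsub j hj hx))
      (hσ'.mono (hsub j hj)) (hy.mono (hsub j hj)) (fun x hx => hK x (hsub j hj hx))
      fun x hx => ?_
    have hdist : dist (p (j + 1)) x < δ := by
      rw [Real.dist_eq, abs_of_nonneg (sub_nonneg.2 hx.2)]
      linarith [hx.1, uniformPartition_succ_sub (a := a) (b := b) (N := N) j]
    rw [← dist_eq_norm]
    exact (hyδ _ (uniformPartition_mem_Icc hab hj) x (hsub j hj hx) hdist).le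
  have hint : ∀ j < N, IntervalIntegrable (fun x => inner ℝ (σ' x) (y x)) MeasureTheory.volume
      (p j) (p (j + 1)) := fun j hj =>
    ((hσ'.inner hy).mono (hsub j hj)).intervalIntegrable_of_Icc (hp j.le_succ)
  refine ⟨N, by exact_mod_cast hN0.ne', ?_⟩
  calc _ ≤ ∑ j ∈ range N,
        ((∫ x in p j..p (j + 1), inner ℝ (σ' x) (y x)) + K * η * ((b - a) / N)) :=
        sum_le_sum fun j hj => hpiece j (mem_range.1 hj)
    _ = (∫ x in a..b, inner ℝ (σ' x) (y x)) + K * (b - a) * η := by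
      rw [sum_add_distrib, intervalIntegral.sum_integral_adjacent_intervals hint, sum_const,
        card_range, nsmul_eq_mul, show p 0 = a from uniformPartition_zero,
        show p N = b from uniformPartition_self (by exact_mod_cast hN0.ne')]
      field_simp
    _ ≤ _ := by linarith

lemma energy_sub_integral_le_energy_add_diss {W D : Y → ℝ} {σ σ' y : ℝ → Y} {a b : ℝ}
    (hab : a ≤ b) (hσ : ∀ x ∈ Icc a b, HasDerivAt σ (σ' x) x) (hσ' : ContinuousOn σ' (Icc a b))
    (hy : ContinuousOn y (Icc a b))
    (hstab : ∀ s ∈ Icc a b, ∀ yb, energy W σ s (y s) ≤ energy W σ s yb + D (yb - y s)) :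
    ((energy W σ a (y a) - ∫ x in a..b, inner ℝ (σ' x) (y x) : ℝ) : EReal)
      ≤ (energy W σ b (y b) : EReal) + diss D y a b := by
  refine EReal.coe_le_coe_add_coe_of_forall_pos fun ε hε => ?_
  obtain ⟨N, hN, hsum⟩ := exists_sum_inner_sub_le_integral_add hab hσ hσ' hy hε
  set p := uniformPartition a b N
  have hp0 : p 0 = a := uniformPartition_zero
  have hpN : p N = b := uniformPartition_self hN
  refine ⟨∑ j ∈ range N, D (y (p (j + 1)) - y (p j)), ?_, ?_⟩
  · rw [← hp0, ← hpN]
    exact ofReal_sum_le_diss D y (monotone_uniformPartition hab) N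
  have htel : energy W σ a (y a) - energy W σ b (y b)
      ≤ ∑ j ∈ range N, (inner ℝ (σ (p (j + 1)) - σ (p j)) (y (p (j + 1)))
        + D (y (p (j + 1)) - y (p j))) := by
    rw [← hp0, ← hpN, ← sum_range_sub' (fun j => energy W σ (p j) (y (p j)))]
    exact sum_le_sum fun j hj => energy_sub_energy_le
      (hstab _ (uniformPartition_mem_Icc hab (mem_range.1 hj).le)) _
  rw [sum_add_distrib] at htel
  linarith

end energy

theorem stmt8_general {Y : Type*} [NormedAddCommGroup Y] [InnerProductSpace ℝ Y]
    (T : ℝ)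
    (W : Y → ℝ) (D : Y → ℝ)
    (σ σ' : ℝ → Y) (hσ : ∀ s : ℝ, HasDerivAt σ (σ' s) s) (hσ'c : Continuous σ')
    (y : ℝ → Y) (hyc : ContinuousOn y (Set.Icc 0 T))
    (hstab : ∀ s ∈ Set.Icc 0 T, ∀ yb : Y,
      W (y s) - (inner ℝ (σ s) (y s) : ℝ) ≤ W yb - (inner ℝ (σ s) yb : ℝ) + D (yb - y s)) :
    ∀ t ∈ Set.Icc 0 T,
      ((W (y 0) - (inner ℝ (σ 0) (y 0) : ℝ)
          - ∫ s in (0 : ℝ)..t, (inner ℝ (σ' s) (y s) : ℝ) : ℝ) : EReal)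
        ≤ ((W (y t) - (inner ℝ (σ t) (y t) : ℝ) : ℝ) : EReal) + (diss D y 0 t : EReal) := by
  rintro t ⟨ht0, htT⟩
  exact energy_sub_integral_le_energy_add_diss ht0 (fun x _ => hσ x) hσ'c.continuousOn
    (hyc.mono (Icc_subset_Icc_right htT)) fun s hs => hstab s ⟨hs.1, hs.2.trans htT⟩

/-- Lower energy estimate from stability. -/
theorem stmt8 {Y : Type*} [NormedAddCommGroup Y] [InnerProductSpace ℝ Y]
    [FiniteDimensional ℝ Y]
    (T : ℝ) (hT : 0 ≤ T)
    (W : Y → ℝ) (D : Y → ℝ) (hDnn : ∀ a, 0 ≤ D a) (hD0 : D 0 = 0)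
    (σ σ' : ℝ → Y) (hσ : ∀ s : ℝ, HasDerivAt σ (σ' s) s) (hσ'c : Continuous σ')
    (y : ℝ → Y) (hyc : ContinuousOn y (Set.Icc 0 T))
    (M : ℝ) (hM : ∀ t ∈ Set.Icc 0 T, ‖y t‖ ≤ M)
    (hstab : ∀ s ∈ Set.Icc 0 T, ∀ yb : Y,
      W (y s) - (inner ℝ (σ s) (y s) : ℝ) ≤ W yb - (inner ℝ (σ s) yb : ℝ) + D (yb - y s)) :
    ∀ t ∈ Set.Icc 0 T,
      ((W (y 0) - (inner ℝ (σ 0) (y 0) : ℝ)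
          - ∫ s in (0 : ℝ)..t, (inner ℝ (σ' s) (y s) : ℝ) : ℝ) : EReal)
        ≤ ((W (y t) - (inner ℝ (σ t) (y t) : ℝ) : ℝ) : EReal) + (diss D y 0 t : EReal) :=
  stmt8_general T W D σ σ' hσ hσ'c y hyc hstab
end
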